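/- Fix a constant sample size ℓ ≥ 1 and a protocol family {(g_n^[0], g_n^[1])}_{n} with sample size ℓ such that F_n is identically zero on [0,1] for all sufficiently large n. Then there exists a sequence of initial configurations C_n such that for every ε > 0 there is a constant c > 0 with Pr[τ_n(C_n) > n^{1−ε}] ≥ 1 − n^{−c} for all sufficiently large n. -/

import Mathlib

open MeasureTheory ProbabilityTheory
open scoped ENNReal

/-- `P_b(p)`: probability that an agent with opinion `b` adopts opinion 1, when the current
proportion of 1-opinions is `p`; it is the expectation of `g(K)` for `K ~ Binomial(ℓ, p)`. -/
noncomputable def sampleProb (ℓ : ℕ) (g : ℕ → ℝ) (p : ℝ) : ℝ :=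
  ∑ k ∈ Finset.range (ℓ + 1), (ℓ.choose k : ℝ) * p ^ k * (1 - p) ^ (ℓ - k) * g k

/-- Probability that a `Binomial(m, q)` random variable equals `k`. -/
noncomputable def binomProb (m : ℕ) (q : ℝ) (k : ℕ) : ℝ :=
  (m.choose k : ℝ) * q ^ k * (1 - q) ^ (m - k)

/-- One-step transition probability of the configuration chain: conditionally on `X_t = x`,
`X_{t+1} = z + B₁ + B₀` with independent `B₁ ~ Binomial(x - z, P₁(x/n))` and
`B₀ ~ Binomial(n - x - (1 - z), P₀(x/n))`. -/
noncomputable def transProb (n ℓ : ℕ) (g0 g1 : ℕ → ℝ) (z x y : ℕ) : ℝ :=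
  ∑ j ∈ Finset.range (n + 1),
    if z + j ≤ y then
      binomProb (x - z) (sampleProb ℓ g1 ((x : ℝ) / n)) j *
        binomProb (n - x - (1 - z)) (sampleProb ℓ g0 ((x : ℝ) / n)) (y - z - j)
    else 0

/-- A protocol with sample size `ℓ` has update probabilities in `[0,1]`. -/
def ValidProtocol (ℓ : ℕ) (g0 g1 : ℕ → ℝ) : Prop :=
  ∀ k ≤ ℓ, (0 ≤ g0 k ∧ g0 k ≤ 1) ∧ (0 ≤ g1 k ∧ g1 k ≤ 1)

/-- `(X_t)` is (a version of) the time-homogeneous configuration Markov chain of the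
bit-dissemination protocol `(g0, g1)` with `n` agents, sample size `ℓ` and source opinion `z`:
conditionally on the whole past, the law of `X_{t+1}` is given by `transProb` applied to the
current state. -/
def IsBDChain (n ℓ : ℕ) (g0 g1 : ℕ → ℝ) (z : ℕ) {Ω : Type*} [MeasurableSpace Ω]
    (μ : Measure Ω) (X : ℕ → Ω → ℕ) : Prop :=
  (∀ t, Measurable (X t)) ∧
    ∀ (t : ℕ) (x : ℕ → ℕ) (y : ℕ), μ {ω | ∀ s ≤ t, X s ω = x s} ≠ 0 →
      ProbabilityTheory.cond μ {ω | ∀ s ≤ t, X s ω = x s} {ω | X (t + 1) ω = y} =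
        ENNReal.ofReal (transProb n ℓ g0 g1 z (x t) y)

/-- The convergence time `τ = inf {t : ∀ s ≥ t, X_s = n·z}`, with value `∞` if no such `t`
exists. -/
noncomputable def convTime (n z : ℕ) {Ω : Type*} (X : ℕ → Ω → ℕ) (ω : Ω) : ℝ≥0∞ :=
  sInf {r : ℝ≥0∞ | ∃ t : ℕ, r = t ∧ ∀ s, t ≤ s → X s ω = n * z}

/-- The characteristic function `F_n(p) = -p + p·P₁(p) + (1-p)·P₀(p)`. -/
noncomputable def charF (ℓ : ℕ) (g0 g1 : ℕ → ℝ) (p : ℝ) : ℝ :=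
  -p + p * sampleProb ℓ g1 p + (1 - p) * sampleProb ℓ g0 p

/-!
Start from the configuration in which only the source holds opinion 1. When `F_n ≡ 0` the update
is unbiased, `x·P₁(x/n) + (n - x)·P₀(x/n) = x`, so in expectation the number `n - X_t` of
0-opinions is only eroded by the source, whose fixed opinion 1 costs `1 - P₁(x/n) ≤ ℓ(1 - x/n)`
(because `F_n(1) = 0` forces `g₁(ℓ) = 1`). Hence `E[n - X_{t+1}] ≥ (1 - ℓ/n)·E[n - X_t]`, and as
`n - X_T ≤ (n - 1)·1{X_T ≠ n}` this gives `Pr[X_T ≠ n] ≥ (1 - ℓ/n)^T ≥ 1 - ℓT/n`, which is at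
least `1 - n^{-ε/2}` for `T = ⌊n^{1-ε}⌋` and `n` large.
-/

open Finset

lemma binomProb_eq_eval_bernsteinPolynomial (m : ℕ) (q : ℝ) (k : ℕ) :
    binomProb m q k = (bernsteinPolynomial ℝ m k).eval q := by
  simp [binomProb, bernsteinPolynomial]

lemma binomProb_nonneg {m : ℕ} {q : ℝ} (hq : q ∈ Set.Icc (0 : ℝ) 1) (k : ℕ) :
    0 ≤ binomProb m q k :=
  mul_nonneg (mul_nonneg (Nat.cast_nonneg _) (pow_nonneg hq.1 _)) (pow_nonneg (sub_nonneg.2 hq.2) _)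

lemma binomProb_eq_zero_of_lt {m k : ℕ} (h : m < k) (q : ℝ) : binomProb m q k = 0 := by
  simp [binomProb, Nat.choose_eq_zero_of_lt h]

lemma sum_binomProb (m : ℕ) (q : ℝ) : ∑ k ∈ range (m + 1), binomProb m q k = 1 := by
  simpa [binomProb_eq_eval_bernsteinPolynomial, Polynomial.eval_finsetSum] using
    congrArg (Polynomial.eval q) (bernsteinPolynomial.sum ℝ m)

lemma sum_sub_mul_binomProb (m : ℕ) (q α : ℝ) :
    ∑ k ∈ range (m + 1), (α - k) * binomProb m q k = α - m * q := by
  have hmean : ∑ k ∈ range (m + 1), (k : ℝ) * binomProb m q k = m * q := by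
    simpa [binomProb_eq_eval_bernsteinPolynomial, Polynomial.eval_finsetSum] using
      congrArg (Polynomial.eval q) (bernsteinPolynomial.sum_smul ℝ m)
  simp only [sub_mul, sum_sub_distrib, ← mul_sum, sum_binomProb, hmean, mul_one]

lemma sampleProb_eq_sum_binomProb (ℓ : ℕ) (g : ℕ → ℝ) (p : ℝ) :
    sampleProb ℓ g p = ∑ k ∈ range (ℓ + 1), binomProb ℓ p k * g k := rfl

lemma sampleProb_mem_Icc {ℓ : ℕ} {g : ℕ → ℝ} (hg : ∀ k ≤ ℓ, g k ∈ Set.Icc (0 : ℝ) 1) {p : ℝ}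
    (hp : p ∈ Set.Icc (0 : ℝ) 1) : sampleProb ℓ g p ∈ Set.Icc (0 : ℝ) 1 := by
  have hg' : ∀ k ∈ range (ℓ + 1), g k ∈ Set.Icc (0 : ℝ) 1 :=
    fun k hk => hg k (Nat.lt_succ_iff.1 (mem_range.1 hk))
  rw [sampleProb_eq_sum_binomProb]
  constructor
  · exact sum_nonneg fun k hk => mul_nonneg (binomProb_nonneg hp k) (hg' k hk).1
  · calc ∑ k ∈ range (ℓ + 1), binomProb ℓ p k * g k
        ≤ ∑ k ∈ range (ℓ + 1), binomProb ℓ p k :=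
          sum_le_sum fun k hk => mul_le_of_le_one_right (binomProb_nonneg hp k) (hg' k hk).2
      _ = 1 := sum_binomProb ℓ p

lemma sampleProb_one (ℓ : ℕ) (g : ℕ → ℝ) : sampleProb ℓ g 1 = g ℓ := by
  simp [sampleProb_eq_sum_binomProb, binomProb_eq_eval_bernsteinPolynomial,
    bernsteinPolynomial.eval_at_1]

lemma pow_mul_le_sampleProb {ℓ : ℕ} {g : ℕ → ℝ} (hg : ∀ k ≤ ℓ, 0 ≤ g k) {p : ℝ}
    (hp : p ∈ Set.Icc (0 : ℝ) 1) : p ^ ℓ * g ℓ ≤ sampleProb ℓ g p := by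
  have hterm : binomProb ℓ p ℓ * g ℓ = p ^ ℓ * g ℓ := by simp [binomProb]
  rw [← hterm, sampleProb_eq_sum_binomProb]
  exact single_le_sum (f := fun k => binomProb ℓ p k * g k)
    (fun k hk => mul_nonneg (binomProb_nonneg hp k) (hg k (Nat.lt_succ_iff.1 (mem_range.1 hk))))
    (self_mem_range_succ ℓ)

section TransProb

variable {n ℓ : ℕ} {g0 g1 : ℕ → ℝ}

lemma transProb_nonneg (hv : ValidProtocol ℓ g0 g1) (z : ℕ) {x : ℕ} (hx : x ≤ n) (y : ℕ) :
    0 ≤ transProb n ℓ g0 g1 z x y := by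
  have hp : (x : ℝ) / n ∈ Set.Icc (0 : ℝ) 1 :=
    ⟨by positivity, div_le_one_of_le₀ (by exact_mod_cast hx) (Nat.cast_nonneg n)⟩
  have hq0 := sampleProb_mem_Icc (fun k hk => (hv k hk).1) hp
  have hq1 := sampleProb_mem_Icc (fun k hk => (hv k hk).2) hp
  refine sum_nonneg fun j _ => ?_
  split_ifs
  · exact mul_nonneg (binomProb_nonneg hq1 _) (binomProb_nonneg hq0 _)
  · exact le_rfl

lemma transProb_one_zero (n ℓ : ℕ) (g0 g1 : ℕ → ℝ) (x : ℕ) :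
    transProb n ℓ g0 g1 1 x 0 = 0 :=
  sum_eq_zero fun j _ => by simp

lemma sum_mul_transProb_one (φ : ℕ → ℝ) {x : ℕ} (hx1 : 1 ≤ x) (hxn : x ≤ n) :
    ∑ y ∈ range (n + 1), φ y * transProb n ℓ g0 g1 1 x y =
      ∑ j ∈ range x, binomProb (x - 1) (sampleProb ℓ g1 (x / n)) j *
        ∑ i ∈ range (n - x + 1), φ (1 + j + i) * binomProb (n - x) (sampleProb ℓ g0 (x / n)) i := by
  set a := binomProb (x - 1) (sampleProb ℓ g1 (x / n))
  set b := binomProb (n - x) (sampleProb ℓ g0 (x / n))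
  have ha : ∀ j, x ≤ j → a j = 0 := fun j hj => binomProb_eq_zero_of_lt (by omega) _
  have hb : ∀ i, n - x < i → b i = 0 := fun i hi => binomProb_eq_zero_of_lt hi _
  have hshift : ∀ j ∈ range (n + 1),
      ∑ y ∈ range (n + 1), φ y * (if 1 + j ≤ y then a j * b (y - 1 - j) else 0) =
        a j * ∑ i ∈ range (n - j), φ (1 + j + i) * b i := by
    intro j hj
    simp only [mul_ite, mul_zero]
    rw [← sum_filter]
    have hfilter : (range (n + 1)).filter (fun y => 1 + j ≤ y) = Ico (1 + j) (n + 1) := by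
      ext y
      simp only [mem_filter, mem_range, mem_Ico]
      omega
    rw [hfilter, sum_Ico_eq_sum_range, show n + 1 - (1 + j) = n - j by omega, mul_sum]
    refine sum_congr rfl fun i _ => ?_
    rw [show 1 + j + i - 1 - j = i by omega]
    ring
  have hz : n - x - (1 - 1) = n - x := by omega
  calc ∑ y ∈ range (n + 1), φ y * transProb n ℓ g0 g1 1 x y
      = ∑ j ∈ range (n + 1), a j * ∑ i ∈ range (n - j), φ (1 + j + i) * b i := by
        rw [← sum_congr rfl hshift, sum_comm]
        simp only [transProb, hz, mul_sum]
        rfl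
    _ = ∑ j ∈ range x, a j * ∑ i ∈ range (n - j), φ (1 + j + i) * b i :=
        (sum_subset (range_subset_range.2 (by omega)) fun j _ hj => by
          rw [ha j (by simpa using hj), zero_mul]).symm
    _ = ∑ j ∈ range x, a j * ∑ i ∈ range (n - x + 1), φ (1 + j + i) * b i := by
        refine sum_congr rfl fun j hj => congrArg (a j * ·) ?_
        refine (sum_subset (range_subset_range.2 (by simp only [mem_range] at hj; omega))
          fun i _ hi => ?_).symm
        rw [hb i (by simp only [mem_range, not_lt] at hi; omega), mul_zero]

lemma sum_sub_mul_transProb_one {x : ℕ} (hx1 : 1 ≤ x) (hxn : x ≤ n) :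
    ∑ y ∈ range (n + 1), ((n : ℝ) - y) * transProb n ℓ g0 g1 1 x y =
      n - 1 - (n - x) * sampleProb ℓ g0 (x / n) - (x - 1) * sampleProb ℓ g1 (x / n) := by
  rw [sum_mul_transProb_one _ hx1 hxn]
  have hinner : ∀ j : ℕ, ∑ i ∈ range (n - x + 1),
      ((n : ℝ) - (1 + j + i : ℕ)) * binomProb (n - x) (sampleProb ℓ g0 (x / n)) i =
        (n - 1 - (n - x) * sampleProb ℓ g0 (x / n)) - j := by
    intro j
    have h := sum_sub_mul_binomProb (n - x) (sampleProb ℓ g0 (x / n)) (n - 1 - j)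
    rw [Nat.cast_sub hxn] at h
    rw [show (n - 1 - (n - x) * sampleProb ℓ g0 (x / n)) - j =
      (n - 1 - j) - (n - x) * sampleProb ℓ g0 (x / n) by ring, ← h]
    refine sum_congr rfl fun i _ => ?_
    push_cast
    ring
  simp only [hinner]
  rw [show range x = range (x - 1 + 1) by rw [Nat.sub_add_cancel hx1],
    sum_congr rfl fun j _ => mul_comm _ _, sum_sub_mul_binomProb, Nat.cast_sub hx1]
  push_cast
  ring

lemma g1_ℓ_eq_one_of_charF_eq_zero (hch : ∀ p ∈ Set.Icc (0 : ℝ) 1, charF ℓ g0 g1 p = 0) :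
    g1 ℓ = 1 := by
  have h := hch 1 ⟨zero_le_one, le_rfl⟩
  simp only [charF, sampleProb_one] at h
  linarith

lemma one_sub_div_mul_le_sum_transProb_one (hv : ValidProtocol ℓ g0 g1)
    (hch : ∀ p ∈ Set.Icc (0 : ℝ) 1, charF ℓ g0 g1 p = 0) {x : ℕ} (hx1 : 1 ≤ x) (hxn : x ≤ n) :
    (1 - ℓ / n) * ((n : ℝ) - x) ≤
      ∑ y ∈ range (n + 1), ((n : ℝ) - y) * transProb n ℓ g0 g1 1 x y := by
  have hn : (0 : ℝ) < n := by exact_mod_cast (by omega : 0 < n)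
  set p : ℝ := x / n with hp_def
  have hp : p ∈ Set.Icc (0 : ℝ) 1 :=
    ⟨by positivity, div_le_one_of_le₀ (by exact_mod_cast hxn) hn.le⟩
  have hx : (x : ℝ) = p * n := by rw [hp_def, div_mul_cancel₀ _ hn.ne']
  have hbalance : p * sampleProb ℓ g1 p + (1 - p) * sampleProb ℓ g0 p = p := by
    have h := hch p hp
    unfold charF at h
    linarith
  have hsource : p ^ ℓ ≤ sampleProb ℓ g1 p := by
    simpa [g1_ℓ_eq_one_of_charF_eq_zero hch] using
      pow_mul_le_sampleProb (fun k hk => (hv k hk).2.1) hp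
  have hbernoulli : 1 + ℓ * (p - 1) ≤ p ^ ℓ := one_add_mul_sub_le_pow (by linarith [hp.1]) ℓ
  rw [sum_sub_mul_transProb_one hx1 hxn, ← hp_def, hx,
    show (1 - ℓ / n) * (n - p * n) = n - p * n - ℓ * (1 - p) by field_simp]
  have hdrift : n - 1 - (n - p * n) * sampleProb ℓ g0 p - (p * n - 1) * sampleProb ℓ g1 p =
      n - p * n - (1 - sampleProb ℓ g1 p) := by
    linear_combination (-(n : ℝ)) * hbalance
  rw [hdrift]
  linarith

lemma ofReal_mul_le_tsum_transProb_one (hv : ValidProtocol ℓ g0 g1)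
    (hch : ∀ p ∈ Set.Icc (0 : ℝ) 1, charF ℓ g0 g1 p = 0) {x : ℕ} (hx1 : 1 ≤ x) (hxn : x ≤ n) :
    ENNReal.ofReal (1 - ℓ / n) * ((n - x : ℕ) : ℝ≥0∞) ≤
      ∑' y, ENNReal.ofReal (transProb n ℓ g0 g1 1 x y) * ((n - y : ℕ) : ℝ≥0∞) := by
  have hcast : ∀ y ≤ n, ((n - y : ℕ) : ℝ≥0∞) = ENNReal.ofReal ((n : ℝ) - y) := fun y hy => by
    rw [← ENNReal.ofReal_natCast, Nat.cast_sub hy]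
  have hterm : ∀ y ∈ range (n + 1), 0 ≤ ((n : ℝ) - y) * transProb n ℓ g0 g1 1 x y := fun y hy =>
    mul_nonneg (sub_nonneg.2 (by exact_mod_cast Nat.lt_succ_iff.1 (mem_range.1 hy)))
      (transProb_nonneg hv 1 hxn y)
  rw [tsum_eq_sum (s := range (n + 1)) fun y hy => by
    rw [Nat.sub_eq_zero_of_le (by simp only [mem_range, not_lt] at hy; omega)]; simp]
  rw [hcast x hxn, ← ENNReal.ofReal_mul' (sub_nonneg.2 (by exact_mod_cast hxn)),
    sum_congr rfl fun y hy => by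
      rw [hcast y (Nat.lt_succ_iff.1 (mem_range.1 hy)), ← ENNReal.ofReal_mul'
        (sub_nonneg.2 (by exact_mod_cast Nat.lt_succ_iff.1 (mem_range.1 hy))), mul_comm],
    ← ENNReal.ofReal_sum_of_nonneg hterm]
  exact ENNReal.ofReal_le_ofReal (one_sub_div_mul_le_sum_transProb_one hv hch hx1 hxn)

end TransProb

section Measure

variable {Ω : Type*} [MeasurableSpace Ω] (μ : Measure Ω) {Y : Ω → ℕ}

lemma lintegral_comp_eq_tsum (hY : Measurable Y) (f : ℕ → ℝ≥0∞) :
    ∫⁻ ω, f (Y ω) ∂μ = ∑' k, f k * μ {ω | Y ω = k} := by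
  rw [← lintegral_map (measurable_of_countable f) hY, lintegral_countable']
  congr with k
  rw [Measure.map_apply hY (measurableSet_singleton k)]
  rfl

lemma measure_eq_tsum_inter (hY : Measurable Y) (A : Set Ω) :
    μ A = ∑' k, μ ({ω | Y ω = k} ∩ A) := by
  have h := tsum_measure_preimage_singleton (μ := μ.restrict A) Set.countable_univ
    fun k _ => hY (measurableSet_singleton k)
  rw [tsum_univ (f := fun k => μ.restrict A (Y ⁻¹' {k})), Set.preimage_univ,
    Measure.restrict_apply_univ] at h
  rw [← h]
  exact tsum_congr fun k => Measure.restrict_apply (hY (measurableSet_singleton k))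

end Measure

lemma ofReal_lt_convTime {n z : ℕ} {Ω : Type*} {X : ℕ → Ω → ℕ} {ω : Ω} {r : ℝ}
    (hX : X ⌊r⌋₊ ω ≠ n * z) : ENNReal.ofReal r < convTime n z X ω := by
  refine ((ENNReal.ofReal_lt_natCast (Nat.succ_ne_zero ⌊r⌋₊)).2 ?_).trans_le (le_sInf ?_)
  · exact_mod_cast Nat.lt_floor_add_one r
  · rintro _ ⟨t, rfl, ht⟩
    exact_mod_cast lt_of_not_ge fun h => hX (ht _ h)

namespace IsBDChain

variable {Ω : Type*} [MeasurableSpace Ω] {μ : Measure Ω} {n ℓ : ℕ} {g0 g1 : ℕ → ℝ}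
  {X : ℕ → Ω → ℕ}

section

variable [IsFiniteMeasure μ] {z : ℕ}

lemma measure_inter_succ (hX : IsBDChain n ℓ g0 g1 z μ X) (t x y : ℕ) :
    μ ({ω | X t ω = x} ∩ {ω | X (t + 1) ω = y}) =
      ENNReal.ofReal (transProb n ℓ g0 g1 z x y) * μ {ω | X t ω = x} := by
  obtain ⟨hmeas, hcond⟩ := hX
  -- `{X t = x}` is split according to the history `X 0, …, X (t-1)`.
  let path : (Fin t → ℕ) → ℕ → ℕ := fun v s => if h : s < t then v ⟨s, h⟩ else x
  let U : (Fin t → ℕ) → Set Ω := fun v => {ω | ∀ s ≤ t, X s ω = path v s}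
  have hU : ∀ v, MeasurableSet (U v) := fun v => by
    simp only [U, Set.ofPred_forall]
    exact MeasurableSet.iInter fun s => MeasurableSet.iInter fun _ =>
      hmeas s (measurableSet_singleton _)
  have hdisj : Pairwise (Function.onFun Disjoint U) := by
    intro v v' hne
    obtain ⟨s, hs⟩ := Function.ne_iff.1 hne
    refine Set.disjoint_left.2 fun ω h h' => hs ?_
    simpa [path] using (h s s.2.le).symm.trans (h' s s.2.le)
  have hcover : {ω | X t ω = x} = ⋃ v, U v := by
    ext ω
    refine ⟨fun hω => Set.mem_iUnion.2 ⟨fun s => X s ω, fun s hs => ?_⟩, fun hω => ?_⟩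
    · rcases hs.lt_or_eq with hs | rfl
      · simp [path, hs]
      · simpa [path] using hω
    · obtain ⟨v, hv⟩ := Set.mem_iUnion.1 hω
      simpa [path] using hv t le_rfl
  have hB : MeasurableSet {ω | X (t + 1) ω = y} := hmeas _ (measurableSet_singleton y)
  have hpiece : ∀ v, μ (U v ∩ {ω | X (t + 1) ω = y}) =
      ENNReal.ofReal (transProb n ℓ g0 g1 z x y) * μ (U v) := by
    intro v
    by_cases h0 : μ (U v) = 0
    · rw [h0, mul_zero]
      exact measure_mono_null Set.inter_subset_left h0
    · have h := hcond t (path v) y h0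
      rw [cond_apply (hU v), show path v t = x by simp [path]] at h
      rw [← h, mul_comm, ← mul_assoc, ENNReal.mul_inv_cancel h0 (measure_ne_top μ _), one_mul]
  rw [hcover, Set.iUnion_inter, measure_iUnion (hdisj.mono fun _ _ h =>
      h.mono Set.inter_subset_left Set.inter_subset_left)
      (fun v => (hU v).inter hB),
    measure_iUnion hdisj hU, ← ENNReal.tsum_mul_left]
  exact tsum_congr hpiece

lemma measure_succ (hX : IsBDChain n ℓ g0 g1 z μ X) (t y : ℕ) :
    μ {ω | X (t + 1) ω = y} =
      ∑' x, ENNReal.ofReal (transProb n ℓ g0 g1 z x y) * μ {ω | X t ω = x} := by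
  rw [measure_eq_tsum_inter μ (hX.1 t)]
  exact tsum_congr fun x => hX.measure_inter_succ t x y

lemma lintegral_succ (hX : IsBDChain n ℓ g0 g1 z μ X) (f : ℕ → ℝ≥0∞) (t : ℕ) :
    ∫⁻ ω, f (X (t + 1) ω) ∂μ =
      ∑' x, (∑' y, ENNReal.ofReal (transProb n ℓ g0 g1 z x y) * f y) * μ {ω | X t ω = x} := by
  calc ∫⁻ ω, f (X (t + 1) ω) ∂μ
      = ∑' y, ∑' x, f y * (ENNReal.ofReal (transProb n ℓ g0 g1 z x y) * μ {ω | X t ω = x}) := by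
        rw [lintegral_comp_eq_tsum μ (hX.1 _)]
        exact tsum_congr fun y => by rw [hX.measure_succ, ENNReal.tsum_mul_left]
    _ = _ := by
        rw [ENNReal.tsum_comm]
        refine tsum_congr fun x => ?_
        rw [← ENNReal.tsum_mul_right]
        exact tsum_congr fun y => by ring

lemma pow_mul_lintegral_le (hX : IsBDChain n ℓ g0 g1 z μ X) (f : ℕ → ℝ≥0∞) (c : ℝ≥0∞)
    (hdrift : ∀ t x, μ {ω | X t ω = x} ≠ 0 →
      c * f x ≤ ∑' y, ENNReal.ofReal (transProb n ℓ g0 g1 z x y) * f y) (t : ℕ) :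
    c ^ t * ∫⁻ ω, f (X 0 ω) ∂μ ≤ ∫⁻ ω, f (X t ω) ∂μ := by
  induction t with
  | zero => simp
  | succ t ih =>
    calc c ^ (t + 1) * ∫⁻ ω, f (X 0 ω) ∂μ ≤ c * ∫⁻ ω, f (X t ω) ∂μ := by
          rw [pow_succ', mul_assoc]
          exact mul_le_mul_right ih c
      _ = ∑' x, c * f x * μ {ω | X t ω = x} := by
          rw [lintegral_comp_eq_tsum μ (hX.1 t), ← ENNReal.tsum_mul_left]
          exact tsum_congr fun x => by ring
      _ ≤ ∫⁻ ω, f (X (t + 1) ω) ∂μ := by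
          rw [hX.lintegral_succ]
          refine ENNReal.tsum_le_tsum fun x => ?_
          by_cases h0 : μ {ω | X t ω = x} = 0
          · simp [h0]
          · exact mul_le_mul_left (hdrift t x h0) _

lemma measure_state_zero_eq_zero (hX : IsBDChain n ℓ g0 g1 1 μ X) (h0 : μ {ω | X 0 ω = 0} = 0)
    (t : ℕ) : μ {ω | X t ω = 0} = 0 := by
  cases t with
  | zero => exact h0
  | succ t => simp [hX.measure_succ, transProb_one_zero]

end

lemma one_sub_div_pow_le_measure_ne [IsProbabilityMeasure μ] (hX : IsBDChain n ℓ g0 g1 1 μ X)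
    (hv : ValidProtocol ℓ g0 g1) (hch : ∀ p ∈ Set.Icc (0 : ℝ) 1, charF ℓ g0 g1 p = 0)
    (hℓn : ℓ ≤ n) (hn : 2 ≤ n) (hX0 : ∀ ω, X 0 ω = 1) (T : ℕ) :
    ENNReal.ofReal ((1 - ℓ / n) ^ T) ≤ μ {ω | X T ω ≠ n} := by
  have hc : (0 : ℝ) ≤ 1 - ℓ / n :=
    sub_nonneg.2 (div_le_one_of_le₀ (by exact_mod_cast hℓn) (Nat.cast_nonneg n))
  have hzero : ∀ t, μ {ω | X t ω = 0} = 0 := hX.measure_state_zero_eq_zero (by simp [hX0])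
  have hdrift := hX.pow_mul_lintegral_le (fun y => ((n - y : ℕ) : ℝ≥0∞))
    (ENNReal.ofReal (1 - ℓ / n)) (fun t x hx => by
      have hx1 : 1 ≤ x := Nat.one_le_iff_ne_zero.2 fun h => hx (h ▸ hzero t)
      rcases le_or_gt x n with hxn | hxn
      · exact ofReal_mul_le_tsum_transProb_one hv hch hx1 hxn
      · simp [Nat.sub_eq_zero_of_le hxn.le]) T
  have hupper : ∫⁻ ω, ((n - X T ω : ℕ) : ℝ≥0∞) ∂μ ≤ (n - 1 : ℕ) * μ {ω | X T ω ≠ n} := by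
    have hmeas : MeasurableSet {ω | X T ω ≠ n} := (hX.1 T (measurableSet_singleton n)).compl
    rw [← lintegral_indicator_const hmeas]
    refine lintegral_mono_ae ?_
    filter_upwards [measure_eq_zero_iff_ae_notMem.1 (hzero T)] with ω hω
    by_cases h : X T ω = n
    · simp [h]
    · rw [Set.indicator_of_mem (show ω ∈ {ω | X T ω ≠ n} from h)]
      exact_mod_cast Nat.sub_le_sub_left (Nat.one_le_iff_ne_zero.2 hω) n
  have hn1 : ((n - 1 : ℕ) : ℝ≥0∞) ≠ 0 := by exact_mod_cast (by omega : n - 1 ≠ 0)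
  simp only [hX0, lintegral_const, measure_univ, mul_one] at hdrift
  rw [ENNReal.ofReal_pow hc, ← ENNReal.mul_le_mul_iff_right hn1 (ENNReal.natCast_ne_top _),
    mul_comm]
  exact hdrift.trans hupper

end IsBDChain

lemma one_sub_rpow_neg_le_one_sub_div_pow {n ℓ ε : ℝ} (hn : 0 < n) (hℓ : 0 ≤ ℓ) (hℓn : ℓ ≤ n)
    (hℓε : ℓ ≤ n ^ (ε / 2)) :
    1 - n ^ (-(ε / 2)) ≤ (1 - ℓ / n) ^ ⌊n ^ (1 - ε)⌋₊ := by
  set T := ⌊n ^ (1 - ε)⌋₊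
  have hT : (T : ℝ) ≤ n * n ^ (-ε) := by
    rw [show n * n ^ (-ε) = n ^ (1 - ε) by rw [sub_eq_add_neg, Real.rpow_add hn, Real.rpow_one]]
    exact Nat.floor_le (by positivity)
  have hsplit : n ^ (ε / 2) * n ^ (-ε) = n ^ (-(ε / 2)) := by
    rw [← Real.rpow_add hn]
    ring_nf
  have hTℓ : T * (ℓ / n) ≤ n ^ (-(ε / 2)) :=
    calc T * (ℓ / n) ≤ n * n ^ (-ε) * (ℓ / n) := by gcongr
      _ = ℓ * n ^ (-ε) := by field_simp
      _ ≤ n ^ (-(ε / 2)) := by rw [← hsplit]; gcongr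
  have hbernoulli := one_add_mul_le_pow (show -2 ≤ -(ℓ / n) by
    linarith [div_le_one_of_le₀ hℓn hn.le]) T
  rw [← sub_eq_add_neg] at hbernoulli
  linarith

theorem stmt_11_general (ℓ : ℕ) (g0 g1 : ℕ → ℕ → ℝ)
    (hvalid : ∀ n : ℕ, ValidProtocol ℓ (g0 n) (g1 n))
    (hF : ∃ N₀ : ℕ, ∀ n : ℕ, N₀ ≤ n →
      ∀ p ∈ Set.Icc (0 : ℝ) 1, charF ℓ (g0 n) (g1 n) p = 0) :
    ∃ z x0 : ℕ → ℕ, (∀ n, z n ≤ 1) ∧ (∀ n, z n ≤ x0 n ∧ x0 n ≤ n - 1 + z n) ∧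
      ∀ ε : ℝ, 0 < ε → ∃ c : ℝ, 0 < c ∧ ∃ N : ℕ, ∀ n : ℕ, N ≤ n →
        ∀ (Ω : Type) [MeasurableSpace Ω] (μ : Measure Ω) [IsProbabilityMeasure μ]
          (X : ℕ → Ω → ℕ), IsBDChain n ℓ (g0 n) (g1 n) (z n) μ X →
            (∀ ω, X 0 ω = x0 n) →
            1 - ENNReal.ofReal ((n : ℝ) ^ (-c)) ≤
              μ {ω | ENNReal.ofReal ((n : ℝ) ^ ((1 : ℝ) - ε)) < convTime n (z n) X ω} := by
  obtain ⟨N₀, hF⟩ := hF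
  refine ⟨fun _ => 1, fun _ => 1, fun _ => le_rfl, fun n => ⟨le_rfl, by omega⟩,
    fun ε hε => ⟨ε / 2, half_pos hε, ?_⟩⟩
  obtain ⟨N, hN⟩ := Filter.eventually_atTop.1 <| (Filter.eventually_ge_atTop N₀).and <|
    (Filter.eventually_ge_atTop (ℓ + 2)).and <|
      ((tendsto_rpow_atTop (half_pos hε)).comp tendsto_natCast_atTop_atTop).eventually_ge_atTop
        (ℓ : ℝ)
  refine ⟨N, fun n hn Ω _ μ _ X hX hX0 => ?_⟩
  obtain ⟨hN₀, hℓn, hℓε⟩ := hN n hn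
  have hn : (0 : ℝ) < n := by exact_mod_cast (by omega : 0 < n)
  set T := ⌊(n : ℝ) ^ (1 - ε)⌋₊
  calc 1 - ENNReal.ofReal ((n : ℝ) ^ (-(ε / 2)))
      ≤ ENNReal.ofReal ((1 - ℓ / n) ^ T) := by
        rw [← ENNReal.ofReal_one, ← ENNReal.ofReal_sub _ (by positivity)]
        exact ENNReal.ofReal_le_ofReal (one_sub_rpow_neg_le_one_sub_div_pow hn (Nat.cast_nonneg ℓ)
          (by exact_mod_cast (by omega : ℓ ≤ n)) hℓε)
    _ ≤ μ {ω | X T ω ≠ n} :=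
        hX.one_sub_div_pow_le_measure_ne (hvalid n) (hF n hN₀) (by omega) (by omega) hX0 T
    _ ≤ μ {ω | ENNReal.ofReal ((n : ℝ) ^ ((1 : ℝ) - ε)) < convTime n 1 X ω} :=
        measure_mono fun ω hω => ofReal_lt_convTime (by simpa using hω)

/-- for a protocol family with constant sample size `ℓ ≥ 1` whose
characteristic function `F_n` vanishes identically on `[0,1]` for all sufficiently large `n`,
there is a sequence of initial configurations `C_n` such that for every `ε > 0` there is
`c > 0` with `Pr[τ_n(C_n) > n^{1-ε}] ≥ 1 - n^{-c}` for all sufficiently large `n`. -/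
theorem stmt_11 (ℓ : ℕ) (hℓ : 1 ≤ ℓ) (g0 g1 : ℕ → ℕ → ℝ)
    (hvalid : ∀ n : ℕ, ValidProtocol ℓ (g0 n) (g1 n))
    (hF : ∃ N₀ : ℕ, ∀ n : ℕ, N₀ ≤ n →
      ∀ p ∈ Set.Icc (0 : ℝ) 1, charF ℓ (g0 n) (g1 n) p = 0) :
    ∃ z x0 : ℕ → ℕ, (∀ n, z n ≤ 1) ∧ (∀ n, z n ≤ x0 n ∧ x0 n ≤ n - 1 + z n) ∧
      ∀ ε : ℝ, 0 < ε → ∃ c : ℝ, 0 < c ∧ ∃ N : ℕ, ∀ n : ℕ, N ≤ n →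
        ∀ (Ω : Type) [MeasurableSpace Ω] (μ : Measure Ω) [IsProbabilityMeasure μ]
          (X : ℕ → Ω → ℕ), IsBDChain n ℓ (g0 n) (g1 n) (z n) μ X →
            (∀ ω, X 0 ω = x0 n) →
            1 - ENNReal.ofReal ((n : ℝ) ^ (-c)) ≤
              μ {ω | ENNReal.ofReal ((n : ℝ) ^ ((1 : ℝ) - ε)) < convTime n (z n) X ω} :=
  stmt_11_general ℓ g0 g1 hvalid hF
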